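/- arXiv:2502.03890 — 3 statements merged into one kernel-verified Lean document; each statement's English description precedes it below -/
import Mathlib

section
/- For all $x \geq 0$ and $z \geq 0$, the second-order difference $D_z f_n(x) := f_n(x+z) - f_n(x) - f_n'(x) z$ satisfies $0 \leq x \, D_z f_n(x) \leq z^2/n$. -/
/-!
Since `f'` is the primitive of `g` on `[0, ∞)`, the second-order difference is
`D_z f(x) = ∫_x^{x+z} ∫_x^y g`, which is nonnegative. For `t ≥ x` the bound on `g` gives
`x g(t) ≤ t g(t) ≤ 2/n`, so `x D_z f(x) ≤ (2/n) ∫_x^{x+z} (y - x) dy = z²/n`.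
-/

open MeasureTheory Real

lemma deriv_eq_of_eq_integral_Ici {f F : ℝ → ℝ} {a x : ℝ} (hF : Continuous F) (hax : a < x)
    (hf : ∀ w, a ≤ w → f w = ∫ y in a..w, F y) : deriv f x = F x := by
  have hfx : f =ᶠ[nhds x] fun w => ∫ y in a..w, F y := by
    filter_upwards [eventually_gt_nhds hax] with w hw
    exact hf w hw.le
  rw [hfx.deriv_eq]
  exact hF.deriv_integral F a x

lemma sub_sub_deriv_mul_eq_integral {f F : ℝ → ℝ} {a x z : ℝ} (hF : Continuous F)
    (hax : a < x) (hxz : a ≤ x + z) (hf : ∀ w, a ≤ w → f w = ∫ y in a..w, F y) :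
    f (x + z) - f x - deriv f x * z = ∫ y in x..x + z, (F y - F x) := by
  have hFi : ∀ b c : ℝ, IntervalIntegrable F volume b c := hF.intervalIntegrable
  rw [hf _ hxz, hf _ hax.le, deriv_eq_of_eq_integral_Ici hF hax hf,
    intervalIntegral.integral_interval_sub_left (hFi a _) (hFi a x),
    intervalIntegral.integral_sub (hFi x _) intervalIntegrable_const,
    intervalIntegral.integral_const, smul_eq_mul, add_sub_cancel_left, mul_comm]

lemma mul_integral_le_of_mul_le {g : ℝ → ℝ} {c x y : ℝ} (hg : IntervalIntegrable g volume x y)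
    (hg_nonneg : ∀ t, 0 ≤ g t) (hbound : ∀ t, 0 < t → t * g t ≤ c) (hx : 0 < x) (hxy : x ≤ y) :
    x * ∫ t in x..y, g t ≤ c * (y - x) := by
  rw [← intervalIntegral.integral_const_mul]
  calc (∫ t in x..y, x * g t) ≤ ∫ _ in x..y, c := by
        refine intervalIntegral.integral_mono_on hxy (hg.const_mul x) intervalIntegrable_const ?_
        intro t ht
        calc x * g t ≤ t * g t := mul_le_mul_of_nonneg_right ht.1 (hg_nonneg t)
          _ ≤ c := hbound t (hx.trans_le ht.1)
    _ = c * (y - x) := by rw [intervalIntegral.integral_const, smul_eq_mul, mul_comm]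

lemma integral_sub_mul_eq (c x z : ℝ) : ∫ y in x..x + z, c * (y - x) = c * (z ^ 2 / 2) := by
  rw [intervalIntegral.integral_const_mul,
    intervalIntegral.integral_comp_sub_right (fun u => u), add_sub_cancel_left, sub_self,
    integral_id]
  ring

lemma mul_integral_primitive_sub_le {g : ℝ → ℝ} {c x z : ℝ} (hg : Continuous g)
    (hg_nonneg : ∀ t, 0 ≤ g t) (hbound : ∀ t, 0 < t → t * g t ≤ c) (hx : 0 < x) (hz : 0 ≤ z) :
    x * ∫ y in x..x + z, ∫ t in x..y, g t ≤ c * (z ^ 2 / 2) := by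
  have hprim : Continuous fun y => ∫ t in x..y, g t := intervalIntegral.continuous_primitive
    hg.intervalIntegrable x
  rw [← intervalIntegral.integral_const_mul, ← integral_sub_mul_eq]
  refine intervalIntegral.integral_mono_on (by linarith)
    ((hprim.const_mul x).intervalIntegrable _ _)
    ((continuous_const.mul (continuous_id.sub continuous_const)).intervalIntegrable _ _)
    fun y hy => mul_integral_le_of_mul_le (hg.intervalIntegrable _ _) hg_nonneg hbound hx hy.1

theorem stmt5_general
    (n : ℕ)
    (g : ℝ → ℝ) (hg_cont : Continuous g) (hg_nonneg : ∀ x, 0 ≤ g x)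
    (hg_bound : ∀ y : ℝ, 0 < y → g y ≤ 2 / (n * y))
    (f : ℝ → ℝ)
    (hf : ∀ z : ℝ, f z = ∫ y in (0:ℝ)..max z 0, ∫ x in (0:ℝ)..y, g x) :
    ∀ x z : ℝ, 0 ≤ x → 0 ≤ z →
      0 ≤ x * (f (x + z) - f x - deriv f x * z) ∧
      x * (f (x + z) - f x - deriv f x * z) ≤ z ^ 2 / n := by
  intro x z hx hz
  rcases hx.eq_or_lt with rfl | hx
  · simp only [zero_mul, le_refl, true_and]
    positivity
  have hD : f (x + z) - f x - deriv f x * z = ∫ y in x..x + z, ∫ t in x..y, g t := by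
    rw [sub_sub_deriv_mul_eq_integral (intervalIntegral.continuous_primitive
      hg_cont.intervalIntegrable 0) hx (by linarith) fun w hw => by rw [hf, max_eq_left hw]]
    exact intervalIntegral.integral_congr fun y _ =>
      intervalIntegral.integral_interval_sub_left (hg_cont.intervalIntegrable _ _)
        (hg_cont.intervalIntegrable _ _)
  have hbound : ∀ t, 0 < t → t * g t ≤ 2 / n := fun t ht => by
    calc t * g t ≤ t * (2 / (n * t)) := mul_le_mul_of_nonneg_left (hg_bound t ht) ht.le
      _ = 2 / n := by rw [mul_comm (n : ℝ), ← div_div, mul_div_assoc', mul_div_cancel₀ _ ht.ne']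
  rw [hD]
  refine ⟨mul_nonneg hx.le (intervalIntegral.integral_nonneg (by linarith) fun y hy =>
    intervalIntegral.integral_nonneg hy.1 fun t _ => hg_nonneg t), ?_⟩
  calc _ ≤ 2 / n * (z ^ 2 / 2) := mul_integral_primitive_sub_le hg_cont hg_nonneg hbound hx hz
    _ = z ^ 2 / n := by ring

/-- For `x ≥ 0` and `z ≥ 0`, the second-order difference
`D_z f (x) = f (x+z) - f x - f' x * z` satisfies `0 ≤ x * D_z f (x) ≤ z^2/n`. -/
theorem stmt5
    (n : ℕ) (hn : 1 ≤ n)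
    (g : ℝ → ℝ) (hg_cont : Continuous g) (hg_nonneg : ∀ x, 0 ≤ g x)
    (hg_supp : Function.support g ⊆ Set.Ioc (0:ℝ) 1)
    (hg_integrable : Integrable g) (hg_int : (∫ x, g x) = 1)
    (hg_bound : ∀ y : ℝ, 0 < y → g y ≤ 2 / (n * y))
    (f : ℝ → ℝ)
    (hf : ∀ z : ℝ, f z = ∫ y in (0:ℝ)..max z 0, ∫ x in (0:ℝ)..y, g x) :
    ∀ x z : ℝ, 0 ≤ x → 0 ≤ z →
      0 ≤ x * (f (x + z) - f x - deriv f x * z) ∧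
      x * (f (x + z) - f x - deriv f x * z) ≤ z ^ 2 / n :=
  stmt5_general n g hg_cont hg_nonneg hg_bound f hf
end

section
/- Backward Gronwall inequality for Stieltjes measures: let $\mu$ be a finite Borel measure on $(0, T]$, $C \geq 0$, and let $u : [0, T] \to [0,\infty)$ be a bounded measurable function satisfying $u(t) \leq C \int_{(t, T]} u(s)\, \mu(ds)$ for every $t \in [0, T]$. Then $u(t) = 0$ for all $t \in [0,T]$. -/
/-!
Let `c` be the infimum of the points `c ≥ a` such that `u` vanishes on `(c, T]`; then `u`
vanishes on `[c, T]`. If `c > a`, pick `b < c` with `C μ (b, c) < 1`, which is possible because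
`μ (c - δ, c) → 0` as `δ → 0⁺` even when `μ` has atoms. On `[b, c)` the inequality becomes
`u t ≤ C ∫_{(t, c)} u dμ ≤ C μ (b, c) · sup_{[b, c)} u`, so the supremum vanishes, and `u`
vanishes on `(b, T]`, contradicting the choice of `c`.
-/

open MeasureTheory Filter Set Topology

lemma tendsto_measure_Ioo_sub_nhdsGT (μ : Measure ℝ) [IsFiniteMeasure μ] (a : ℝ) :
    Tendsto (fun δ ↦ μ (Ioo (a - δ) a)) (𝓝[>] 0) (𝓝 0) := by
  have hempty : ⋂ δ > (0 : ℝ), Ioo (a - δ) a = ∅ := by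
    ext x
    simp only [mem_iInter, mem_Ioo, mem_empty_iff_false, iff_false, not_forall]
    by_cases hx : x < a
    · exact ⟨a - x, sub_pos.2 hx, fun h ↦ by linarith [h.1]⟩
    · exact ⟨1, one_pos, fun h ↦ hx h.2⟩
  simpa [Function.comp_def, hempty] using
    tendsto_measure_biInter_gt (μ := μ) (s := fun δ ↦ Ioo (a - δ) a) (a := 0)
      (fun _ _ ↦ nullMeasurableSet_Ioo) (fun _ _ _ hij ↦ Ioo_subset_Ioo (by linarith) le_rfl)
      ⟨1, one_pos, measure_ne_top _ _⟩

lemma exists_mem_Ioo_mul_measureReal_Ioo_lt_one (μ : Measure ℝ) [IsFiniteMeasure μ] (C : ℝ)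
    {a c : ℝ} (hac : a < c) : ∃ b ∈ Ioo a c, C * μ.real (Ioo b c) < 1 := by
  have hlim : Tendsto (fun δ ↦ C * μ.real (Ioo (c - δ) c)) (𝓝[>] 0) (𝓝 0) := by
    simpa [measureReal_def] using ((ENNReal.tendsto_toReal ENNReal.zero_ne_top).comp
      (tendsto_measure_Ioo_sub_nhdsGT μ c)).const_mul C
  obtain ⟨δ, hδ_small, hδ_pos, hδ_lt⟩ := ((hlim.eventually_lt_const one_pos).and
    (Ioo_mem_nhdsGT (sub_pos.2 hac))).exists
  exact ⟨c - δ, ⟨by linarith, by linarith⟩, hδ_small⟩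

lemma eqOn_zero_of_le_mul_setIntegral_Ioo (μ : Measure ℝ) [IsFiniteMeasure μ] {u : ℝ → ℝ}
    {C b c : ℝ} (hC : 0 ≤ C) (hsmall : C * μ.real (Ioo b c) < 1)
    (hu_nonneg : ∀ t ∈ Ico b c, 0 ≤ u t) (hu_bdd : BddAbove (u '' Ico b c))
    (h : ∀ t ∈ Ico b c, u t ≤ C * ∫ s in Ioo t c, u s ∂μ) :
    ∀ t ∈ Ico b c, u t = 0 := by
  set S := sSup (u '' Ico b c)
  have hu_le_S : ∀ t ∈ Ico b c, u t ≤ S := fun t ht ↦ le_csSup hu_bdd (mem_image_of_mem u ht)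
  have hS_nonneg : 0 ≤ S := Real.sSup_nonneg (forall_mem_image.2 hu_nonneg)
  have hu_le : ∀ t ∈ Ico b c, u t ≤ C * μ.real (Ioo b c) * S := by
    intro t ht
    have hnorm : ∀ s ∈ Ioo t c, ‖u s‖ ≤ S := fun s hs ↦ by
      have hs' : s ∈ Ico b c := ⟨ht.1.trans hs.1.le, hs.2⟩
      rw [Real.norm_of_nonneg (hu_nonneg s hs')]
      exact hu_le_S s hs'
    calc u t ≤ C * ∫ s in Ioo t c, u s ∂μ := h t ht
      _ ≤ C * (S * μ.real (Ioo t c)) := by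
          gcongr
          exact (le_abs_self _).trans
            (norm_setIntegral_le_of_norm_le_const (measure_lt_top _ _) hnorm)
      _ ≤ C * (S * μ.real (Ioo b c)) := by
          gcongr
          exacts [measure_ne_top _ _, ht.1]
      _ = C * μ.real (Ioo b c) * S := by ring
  have hS_le : S ≤ C * μ.real (Ioo b c) * S :=
    Real.sSup_le (forall_mem_image.2 hu_le) (by positivity)
  have hS_nonpos : S ≤ 0 := by nlinarith
  exact fun t ht ↦ le_antisymm ((hu_le_S t ht).trans hS_nonpos) (hu_nonneg t ht)

section BackwardGronwall

variable {μ : Measure ℝ} {u : ℝ → ℝ} {C a T : ℝ}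

lemma eq_zero_of_forall_Ioc_eq_zero (hu_nonneg : ∀ t ∈ Icc a T, 0 ≤ u t)
    (h : ∀ t ∈ Icc a T, u t ≤ C * ∫ s in Ioc t T, u s ∂μ) {t : ℝ} (ht : t ∈ Icc a T)
    (hzero : ∀ s ∈ Ioc t T, u s = 0) : u t = 0 :=
  le_antisymm (by simpa [setIntegral_eq_zero_of_forall_eq_zero hzero] using h t ht)
    (hu_nonneg t ht)

lemma exists_lt_forall_Ioc_eq_zero [IsFiniteMeasure μ] (hC : 0 ≤ C)
    (hu_nonneg : ∀ t ∈ Icc a T, 0 ≤ u t) (hu_bdd : BddAbove (u '' Icc a T))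
    (h : ∀ t ∈ Icc a T, u t ≤ C * ∫ s in Ioc t T, u s ∂μ) {c : ℝ} (hc : c ∈ Ioc a T)
    (hzero : ∀ s ∈ Icc c T, u s = 0) : ∃ b ∈ Ioo a c, ∀ s ∈ Ioc b T, u s = 0 := by
  obtain ⟨b, hb, hsmall⟩ := exists_mem_Ioo_mul_measureReal_Ioo_lt_one μ C hc.1
  have hsub : Ico b c ⊆ Icc a T := Ico_subset_Icc_self.trans (Icc_subset_Icc hb.1.le hc.2)
  have hcut : ∀ t ∈ Ico b c, ∫ s in Ioc t T, u s ∂μ = ∫ s in Ioo t c, u s ∂μ := fun t _ ↦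
    setIntegral_eq_of_subset_of_forall_sdiff_eq_zero measurableSet_Ioc
      (Ioo_subset_Ioc_self.trans (Ioc_subset_Ioc_right hc.2))
      (fun s hs ↦ hzero s ⟨not_lt.1 fun hsc ↦ hs.2 ⟨hs.1.1, hsc⟩, hs.1.2⟩)
  have hzero_Ico : ∀ t ∈ Ico b c, u t = 0 :=
    eqOn_zero_of_le_mul_setIntegral_Ioo μ hC hsmall (fun t ht ↦ hu_nonneg t (hsub ht))
      (hu_bdd.mono (image_mono hsub)) (fun t ht ↦ hcut t ht ▸ h t (hsub ht))
  refine ⟨b, hb, fun s hs ↦ ?_⟩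
  rcases lt_or_ge s c with hsc | hcs
  · exact hzero_Ico s ⟨hs.1.le, hsc⟩
  · exact hzero s ⟨hcs, hs.2⟩

theorem eqOn_zero_of_le_mul_setIntegral_Ioc [IsFiniteMeasure μ] (hC : 0 ≤ C)
    (hu_nonneg : ∀ t ∈ Icc a T, 0 ≤ u t) (hu_bdd : BddAbove (u '' Icc a T))
    (h : ∀ t ∈ Icc a T, u t ≤ C * ∫ s in Ioc t T, u s ∂μ) :
    ∀ t ∈ Icc a T, u t = 0 := by
  rcases lt_or_ge T a with hTa | haT
  · exact fun t ht ↦ absurd (ht.1.trans ht.2) (not_le.2 hTa)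
  set Z := {c ∈ Icc a T | ∀ s ∈ Ioc c T, u s = 0}
  have hTZ : T ∈ Z := ⟨⟨haT, le_rfl⟩, fun s hs ↦ absurd hs.2 (not_le.2 hs.1)⟩
  have hZ_bdd : BddBelow Z := ⟨a, fun x hx ↦ hx.1.1⟩
  set c := sInf Z
  have hc : c ∈ Icc a T := ⟨le_csInf ⟨T, hTZ⟩ fun x hx ↦ hx.1.1, csInf_le hZ_bdd hTZ⟩
  have hzero_Ioc : ∀ s ∈ Ioc c T, u s = 0 := fun s hs ↦ by
    obtain ⟨x, hxZ, hxs⟩ := exists_lt_of_csInf_lt ⟨T, hTZ⟩ hs.1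
    exact hxZ.2 s ⟨hxs, hs.2⟩
  have hzero : ∀ s ∈ Icc c T, u s = 0 := fun s hs ↦ by
    rcases hs.1.eq_or_lt with rfl | hcs
    · exact eq_zero_of_forall_Ioc_eq_zero hu_nonneg h hc hzero_Ioc
    · exact hzero_Ioc s ⟨hcs, hs.2⟩
  have hca : c = a := by
    by_contra hne
    obtain ⟨b, hb, hb_zero⟩ := exists_lt_forall_Ioc_eq_zero hC hu_nonneg hu_bdd h
      ⟨lt_of_le_of_ne hc.1 (Ne.symm hne), hc.2⟩ hzero
    exact (csInf_le hZ_bdd ⟨⟨hb.1.le, hb.2.le.trans hc.2⟩, hb_zero⟩).not_gt hb.2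
  exact fun t ht ↦ hzero t (hca ▸ ht)

end BackwardGronwall

theorem stmt15_general
    (T : ℝ)
    (μ : Measure ℝ) [IsFiniteMeasure μ]
    (C : ℝ) (hC : 0 ≤ C)
    (u : ℝ → ℝ)
    (hu_nonneg : ∀ t ∈ Set.Icc (0:ℝ) T, 0 ≤ u t)
    (hu_bdd : ∃ M : ℝ, ∀ t ∈ Set.Icc (0:ℝ) T, u t ≤ M)
    (h : ∀ t ∈ Set.Icc (0:ℝ) T, u t ≤ C * ∫ s in Set.Ioc t T, u s ∂μ) :
    ∀ t ∈ Set.Icc (0:ℝ) T, u t = 0 := by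
  obtain ⟨M, hM⟩ := hu_bdd
  exact eqOn_zero_of_le_mul_setIntegral_Ioc hC hu_nonneg ⟨M, forall_mem_image.2 hM⟩ h

/-- Backward Gronwall inequality: if `u` is bounded, nonnegative, measurable
on `[0, T]` and `u t ≤ C ∫_{(t, T]} u dμ` for all `t ∈ [0, T]`, with `μ` a
finite measure, then `u ≡ 0` on `[0, T]`. -/
theorem stmt15
    (T : ℝ) (hT : 0 < T)
    (μ : Measure ℝ) [IsFiniteMeasure μ]
    (C : ℝ) (hC : 0 ≤ C)
    (u : ℝ → ℝ) (hu_meas : Measurable u)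
    (hu_nonneg : ∀ t ∈ Set.Icc (0:ℝ) T, 0 ≤ u t)
    (hu_bdd : ∃ M : ℝ, ∀ t ∈ Set.Icc (0:ℝ) T, u t ≤ M)
    (h : ∀ t ∈ Set.Icc (0:ℝ) T, u t ≤ C * ∫ s in Set.Ioc t T, u s ∂μ) :
    ∀ t ∈ Set.Icc (0:ℝ) T, u t = 0 :=
  stmt15_general T μ C hC u hu_nonneg hu_bdd h
end

section
/- Gronwall inequality for Stieltjes measures: let $\mu$ be a Borel measure on $[0,\infty)$ finite on bounded sets, $a \geq 0$, and let $u : [0,\infty) \to [0,\infty)$ be measurable and bounded on bounded intervals, satisfying $u(t) \leq a + \int_{[0,t)} u(s)\, \mu(ds)$ for all $t \geq 0$. Then $u(t) \leq a\, \exp\{\mu([0,t))\}$ for every $t \geq 0$. -/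
/-!
Write `F s = μ([0, s))`. The key estimate is the Stieltjes analogue of
`∫₀ˣ r e^{ry} dy = e^{rx} - 1`, namely `∫_{[0,t)} exp (r F) dμ ≤ (exp (r F(t)) - 1) / r`.
By the layer-cake formula it reduces to the tail bound `μ {s ∈ [0,t) | y ≤ F s} ≤ F(t) - y`,
which holds because this set is an up-set of `[0,t)` with some infimum `s₀`, so its complement
`[0, s₀)` or `[0, s₀]` has mass at least `y`. Hence if `u ≤ a e^F + K e^{2F}` on `[0,t)`, the right-hand side of the
Gronwall hypothesis is at most `a e^{F(t)} + (K/2) e^{2F(t)}`. Starting from `K` a bound for `u`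
on `[0,T]`, each iteration halves `K`, so `u ≤ a e^F` on `[0,T]`.
-/

open MeasureTheory Set Filter Topology Real
open scoped ENNReal

theorem measurable_toReal_measure_Ico (μ : Measure ℝ) (c : ℝ) :
    Measurable fun s => (μ (Ico c s)).toReal :=
  ENNReal.measurable_toReal.comp
    (Monotone.measurable fun _ _ h => measure_mono (Ico_subset_Ico_right h))

theorem measure_Ico_inter_setOf_le_le_sub (μ : Measure ℝ) {c t : ℝ} (ht : μ (Ico c t) ≠ ∞)
    {y : ℝ≥0∞} (hy : y ≠ ∞) :
    μ (Ico c t ∩ {s | y ≤ μ (Ico c s)}) ≤ μ (Ico c t) - y := by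
  set B := Ico c t ∩ {s | y ≤ μ (Ico c s)}
  rcases B.eq_empty_or_nonempty with hB | hB
  · simp [hB]
  have hB_meas : MeasurableSet B := measurableSet_Ico.inter <| measurableSet_le measurable_const <|
    Monotone.measurable fun _ _ h => measure_mono (Ico_subset_Ico_right h)
  have hB_bdd : BddBelow B := ⟨c, fun s hs => hs.1.1⟩
  set s₀ := sInf B
  -- The complement contains `[c, s₀)`, or `[c, s₀] = ⋂ r > s₀, [c, r)` if `s₀ ∉ B`.
  obtain ⟨K, hK, hyK⟩ : ∃ K ⊆ Ico c t \ B, y ≤ μ K := by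
    by_cases hs₀ : s₀ ∈ B
    · refine ⟨Ico c s₀, fun s hs => ⟨⟨hs.1, hs.2.trans hs₀.1.2⟩, fun hsB => ?_⟩, hs₀.2⟩
      exact (csInf_le hB_bdd hsB).not_gt hs.2
    · obtain ⟨b, hb⟩ := hB
      have hs₀t : s₀ < t := (csInf_le hB_bdd hb).trans_lt hb.1.2
      refine ⟨⋂ r > s₀, Ico c r, fun s hs => ?_, ?_⟩
      · rw [mem_iInter₂] at hs
        have hs₀s : s ≤ s₀ := le_of_forall_gt fun r hr => (hs r hr).2
        refine ⟨⟨(hs t hs₀t).1, hs₀s.trans_lt hs₀t⟩, fun hsB => hs₀ ?_⟩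
        rwa [le_antisymm hs₀s (csInf_le hB_bdd hsB)] at hsB
      · refine ge_of_tendsto (tendsto_measure_biInter_gt (fun _ _ => nullMeasurableSet_Ico)
          (fun _ _ _ h => Ico_subset_Ico_right h) ⟨t, hs₀t, ht⟩) ?_
        filter_upwards [self_mem_nhdsWithin] with r hr
        obtain ⟨b', hb', hb'r⟩ := exists_lt_of_csInf_lt ⟨b, hb⟩ hr
        exact hb'.2.trans (measure_mono (Ico_subset_Ico_right hb'r.le))
  refine ENNReal.le_sub_of_add_le_right hy ?_
  calc μ B + y ≤ μ B + μ (Ico c t \ B) := by gcongr; exact hyK.trans (measure_mono hK)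
    _ = μ (Ico c t) := by
      rw [← measure_inter_add_sdiff (Ico c t) hB_meas, inter_eq_right.mpr inter_subset_left]

theorem hasDerivAt_exp_const_mul (r y : ℝ) :
    HasDerivAt (fun y => exp (r * y)) (exp (r * y) * r) y :=
  ((hasDerivAt_id y).const_mul r).exp.congr_deriv (by simp)

theorem integral_exp_const_mul_mul_const (r x : ℝ) :
    ∫ y in 0..x, exp (r * y) * r = exp (r * x) - 1 := by
  rw [intervalIntegral.integral_eq_sub_of_hasDerivAt (fun y _ => hasDerivAt_exp_const_mul r y)
    ((by fun_prop : Continuous fun y => exp (r * y) * r).intervalIntegrable 0 x)]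
  simp

theorem integral_sub_mul_exp_const_mul_mul_const {r : ℝ} (hr : r ≠ 0) (M : ℝ) :
    ∫ y in 0..M, (M - y) * (exp (r * y) * r) = (exp (r * M) - 1) / r - M := by
  have hderiv (y : ℝ) : HasDerivAt (fun y => (M - y) * exp (r * y) + exp (r * y) / r)
      ((M - y) * (exp (r * y) * r)) y :=
    ((((hasDerivAt_id' y).const_sub M).mul (hasDerivAt_exp_const_mul r y)).add
      ((hasDerivAt_exp_const_mul r y).div_const r)).congr_deriv (by field_simp; ring)
  rw [intervalIntegral.integral_eq_sub_of_hasDerivAt (fun y _ => hderiv y)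
    ((by fun_prop : Continuous fun y => (M - y) * (exp (r * y) * r)).intervalIntegrable 0 M)]
  simp only [sub_self, zero_mul, zero_add, sub_zero, mul_zero, exp_zero, mul_one, one_div]
  ring

theorem lintegral_ofReal_integral_le_of_measure_le_sub {α : Type*} [MeasurableSpace α]
    (ν : Measure α) {f : α → ℝ} {g : ℝ → ℝ} {M : ℝ} (hf_nn : 0 ≤ f) (hf : Measurable f)
    (hg : Continuous g) (hg_nn : ∀ y > 0, 0 ≤ g y) (hM : 0 ≤ M)
    (htail : ∀ y > 0, ν {a | y ≤ f a} ≤ ENNReal.ofReal (M - y)) :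
    ∫⁻ a, ENNReal.ofReal (∫ y in 0..f a, g y) ∂ν ≤ ENNReal.ofReal (∫ y in 0..M, (M - y) * g y) := by
  have hh : Continuous fun y => (M - y) * g y := by fun_prop
  rw [lintegral_comp_eq_lintegral_meas_le_mul_of_measurable ν hf_nn hf
    (fun y _ => hg.intervalIntegrable 0 y) hg.measurable hg_nn]
  calc ∫⁻ y in Ioi 0, ν {a | y ≤ f a} * ENNReal.ofReal (g y)
      ≤ ∫⁻ y in Ioi 0, ENNReal.ofReal ((M - y) * g y) :=
        setLIntegral_mono hh.measurable.ennreal_ofReal fun y hy => by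
          rw [ENNReal.ofReal_mul' (hg_nn y hy)]
          gcongr
          exact htail y hy
    _ = ∫⁻ y in Ioc 0 M, ENNReal.ofReal ((M - y) * g y) := by
        rw [← Ioc_union_Ioi_eq_Ioi hM, lintegral_union measurableSet_Ioi (Ioc_disjoint_Ioi le_rfl),
          setLIntegral_congr_fun measurableSet_Ioi (g := 0) fun y hy => ENNReal.ofReal_eq_zero.2
            (mul_nonpos_of_nonpos_of_nonneg (sub_nonpos.2 hy.le) (hg_nn y (hM.trans_lt hy))),
          Pi.zero_def, lintegral_zero, add_zero]
    _ = ENNReal.ofReal (∫ y in 0..M, (M - y) * g y) := by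
        rw [intervalIntegral.integral_of_le hM, ofReal_integral_eq_lintegral_ofReal
          hh.integrableOn_Ioc ((ae_restrict_iff' measurableSet_Ioc).2 (ae_of_all _ fun y hy =>
            mul_nonneg (sub_nonneg.2 hy.2) (hg_nn y hy.1)))]

theorem integral_exp_mul_toReal_measure_Ico_le (μ : Measure ℝ) {c t r : ℝ}
    (ht : μ (Ico c t) ≠ ∞) (hr : 0 < r) :
    ∫ s in Ico c t, exp (r * (μ (Ico c s)).toReal) ∂μ
      ≤ (exp (r * (μ (Ico c t)).toReal) - 1) / r := by
  set F := fun s => (μ (Ico c s)).toReal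
  have hF := measurable_toReal_measure_Ico μ c
  have htail (y : ℝ) (hy : 0 < y) :
      μ.restrict (Ico c t) {s | y ≤ F s} ≤ ENNReal.ofReal (F t - y) := by
    rw [Measure.restrict_apply (measurableSet_le measurable_const hF), ENNReal.ofReal_sub _ hy.le,
      ENNReal.ofReal_toReal ht, inter_comm]
    refine le_trans (measure_mono ?_) (measure_Ico_inter_setOf_le_le_sub μ ht ENNReal.ofReal_ne_top)
    rintro s ⟨hs, hys : y ≤ F s⟩
    refine ⟨hs, ?_⟩
    exact (ENNReal.ofReal_le_iff_le_toReal
      (ne_top_of_le_ne_top ht (measure_mono (Ico_subset_Ico_right hs.2.le)))).2 hys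
  have hexp (s : ℝ) : ENNReal.ofReal (exp (r * F s))
      = ENNReal.ofReal (∫ y in 0..F s, exp (r * y) * r) + 1 := by
    rw [integral_exp_const_mul_mul_const, ← ENNReal.ofReal_one, ← ENNReal.ofReal_add
      (sub_nonneg.2 (one_le_exp (by positivity))) zero_le_one, sub_add_cancel]
  have hlin : ∫⁻ s in Ico c t, ENNReal.ofReal (exp (r * F s)) ∂μ
      ≤ ENNReal.ofReal ((exp (r * F t) - 1) / r) := by
    calc ∫⁻ s in Ico c t, ENNReal.ofReal (exp (r * F s)) ∂μ
        = ∫⁻ s in Ico c t, ENNReal.ofReal (∫ y in 0..F s, exp (r * y) * r) ∂μ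
          + ENNReal.ofReal (F t) := by
          simp_rw [hexp]
          rw [lintegral_add_right _ measurable_const, setLIntegral_one, ENNReal.ofReal_toReal ht]
      _ ≤ ENNReal.ofReal ((exp (r * F t) - 1) / r - F t) + ENNReal.ofReal (F t) := by
          rw [← integral_sub_mul_exp_const_mul_mul_const hr.ne']
          gcongr
          exact lintegral_ofReal_integral_le_of_measure_le_sub _ (fun _ => ENNReal.toReal_nonneg) hF
            (by fun_prop) (fun y _ => by positivity) ENNReal.toReal_nonneg htail
      _ = ENNReal.ofReal ((exp (r * F t) - 1) / r) := by
          have hFt : F t ≤ (exp (r * F t) - 1) / r := by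
            rw [le_div_iff₀ hr]
            linarith [add_one_le_exp (r * F t)]
          rw [← ENNReal.ofReal_add (sub_nonneg.2 hFt) ENNReal.toReal_nonneg, sub_add_cancel]
  rw [integral_eq_lintegral_of_nonneg_ae (ae_of_all _ fun _ => (exp_pos _).le)
    (hF.const_mul r).exp.aestronglyMeasurable]
  exact ENNReal.toReal_le_of_le_ofReal
    (div_nonneg (sub_nonneg.2 (one_le_exp (by positivity))) hr.le) hlin

theorem integrableOn_exp_mul_toReal_measure_Ico (μ : Measure ℝ) {c t r : ℝ}
    (ht : μ (Ico c t) ≠ ∞) (hr : 0 ≤ r) :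
    IntegrableOn (fun s => exp (r * (μ (Ico c s)).toReal)) (Ico c t) μ := by
  refine Measure.integrableOn_of_bounded (M := exp (r * (μ (Ico c t)).toReal)) ht
    ((measurable_toReal_measure_Ico μ c).const_mul r).exp.aestronglyMeasurable
    ((ae_restrict_iff' measurableSet_Ico).2 (ae_of_all _ fun s hs => ?_))
  rw [norm_of_nonneg (exp_pos _).le, exp_le_exp]
  exact mul_le_mul_of_nonneg_left
    (ENNReal.toReal_mono ht (measure_mono (Ico_subset_Ico_right hs.2.le))) hr

theorem add_setIntegral_le_of_le_exp_add_exp (μ : Measure ℝ) {c t a K : ℝ} {u : ℝ → ℝ}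
    (ht : μ (Ico c t) ≠ ∞) (ha : 0 ≤ a) (hK : 0 ≤ K) (hu_nonneg : ∀ s ∈ Ico c t, 0 ≤ u s)
    (hu : ∀ s ∈ Ico c t,
      u s ≤ a * exp (μ (Ico c s)).toReal + K * exp (2 * (μ (Ico c s)).toReal)) :
    a + ∫ s in Ico c t, u s ∂μ
      ≤ a * exp (μ (Ico c t)).toReal + K / 2 * exp (2 * (μ (Ico c t)).toReal) := by
  set F := fun s => (μ (Ico c s)).toReal
  have hint₁ : IntegrableOn (fun s => exp (F s)) (Ico c t) μ := by
    simpa using integrableOn_exp_mul_toReal_measure_Ico μ ht zero_le_one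
  have hint₂ := integrableOn_exp_mul_toReal_measure_Ico μ ht zero_le_two
  have hI₁ : ∫ s in Ico c t, exp (F s) ∂μ ≤ exp (F t) - 1 := by
    simpa using integral_exp_mul_toReal_measure_Ico_le μ ht one_pos
  have hI₂ := integral_exp_mul_toReal_measure_Ico_le μ ht two_pos
  calc a + ∫ s in Ico c t, u s ∂μ
      ≤ a + ∫ s in Ico c t, (a * exp (F s) + K * exp (2 * F s)) ∂μ := by
        refine (add_le_add_iff_left a).2 <| integral_mono_of_nonneg
          ((ae_restrict_iff' measurableSet_Ico).2 (ae_of_all _ hu_nonneg))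
          ((hint₁.const_mul a).add (hint₂.const_mul K))
          ((ae_restrict_iff' measurableSet_Ico).2 (ae_of_all _ hu))
    _ = a + (a * ∫ s in Ico c t, exp (F s) ∂μ + K * ∫ s in Ico c t, exp (2 * F s) ∂μ) := by
        rw [integral_add (hint₁.const_mul a) (hint₂.const_mul K), integral_const_mul,
          integral_const_mul]
    _ ≤ a + (a * (exp (F t) - 1) + K * ((exp (2 * F t) - 1) / 2)) := by gcongr
    _ ≤ a * exp (F t) + K / 2 * exp (2 * F t) := by linarith

theorem stmt16_general
    (μ : Measure ℝ) (hμ : ∀ t : ℝ, μ (Set.Icc 0 t) < ⊤)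
    (a : ℝ) (ha : 0 ≤ a)
    (u : ℝ → ℝ)
    (hu_nonneg : ∀ t : ℝ, 0 ≤ t → 0 ≤ u t)
    (hu_locbdd : ∀ T : ℝ, ∃ M : ℝ, ∀ t ∈ Set.Icc (0:ℝ) T, u t ≤ M)
    (h : ∀ t : ℝ, 0 ≤ t → u t ≤ a + ∫ s in Set.Ico 0 t, u s ∂μ) :
    ∀ t : ℝ, 0 ≤ t → u t ≤ a * Real.exp (μ (Set.Ico 0 t)).toReal := by
  intro T hT
  have hfin (t : ℝ) : μ (Ico 0 t) ≠ ∞ := ((measure_mono Ico_subset_Icc_self).trans_lt (hμ t)).ne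
  obtain ⟨M, hM⟩ := hu_locbdd T
  have hM₀ : 0 ≤ M := (hu_nonneg 0 le_rfl).trans (hM 0 ⟨le_rfl, hT⟩)
  have hbound (n : ℕ) : ∀ t ∈ Icc 0 T, u t ≤
      a * exp (μ (Ico 0 t)).toReal + M / 2 ^ n * exp (2 * (μ (Ico 0 t)).toReal) := by
    induction n with
    | zero =>
      intro t ht
      rw [pow_zero, div_one]
      linarith [hM t ht, mul_nonneg ha (exp_pos (μ (Ico 0 t)).toReal).le,
        le_mul_of_one_le_right hM₀ (one_le_exp (by positivity : 0 ≤ 2 * (μ (Ico 0 t)).toReal))]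
    | succ n ih =>
      intro t ht
      rw [pow_succ, ← div_div]
      exact (h t ht.1).trans <| add_setIntegral_le_of_le_exp_add_exp μ (hfin t) ha (by positivity)
        (fun s hs => hu_nonneg s hs.1) fun s hs => ih s ⟨hs.1, hs.2.le.trans ht.2⟩
  have hlim : Tendsto (fun n : ℕ => a * exp (μ (Ico 0 T)).toReal
      + M / 2 ^ n * exp (2 * (μ (Ico 0 T)).toReal)) atTop (𝓝 (a * exp (μ (Ico 0 T)).toReal)) := by
    have hpow := tendsto_pow_atTop_atTop_of_one_lt (one_lt_two (α := ℝ))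
    simpa using tendsto_const_nhds.add ((tendsto_const_nhds.div_atTop hpow).mul_const _)
  exact ge_of_tendsto' hlim fun n => hbound n T ⟨hT, le_rfl⟩

/-- Gronwall inequality for Stieltjes measures: if `u` is nonnegative,
measurable, locally bounded and `u t ≤ a + ∫_{[0,t)} u dμ` for all `t ≥ 0`,
with `μ` finite on bounded sets, then `u t ≤ a exp(μ([0,t)))`. -/
theorem stmt16
    (μ : Measure ℝ) (hμ : ∀ t : ℝ, μ (Set.Icc 0 t) < ⊤)
    (a : ℝ) (ha : 0 ≤ a)
    (u : ℝ → ℝ) (hu_meas : Measurable u)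
    (hu_nonneg : ∀ t : ℝ, 0 ≤ t → 0 ≤ u t)
    (hu_locbdd : ∀ T : ℝ, ∃ M : ℝ, ∀ t ∈ Set.Icc (0:ℝ) T, u t ≤ M)
    (h : ∀ t : ℝ, 0 ≤ t → u t ≤ a + ∫ s in Set.Ico 0 t, u s ∂μ) :
    ∀ t : ℝ, 0 ≤ t → u t ≤ a * Real.exp (μ (Set.Ico 0 t)).toReal :=
  stmt16_general μ hμ a ha u hu_nonneg hu_locbdd h
end
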